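/- For an even positive integer q with q/2 ≡ m mod 2, and p coprime to q, the generalized quadratic Gauss sum G(-p, m, q) has absolute value √(2q). -/

import Mathlib

open Complex Real Finset

/-- Generalized quadratic Gauss sum `G(a, b, c) = Σ_{n=0}^{c-1} exp(2πi(a n² + b n)/c)`. -/
noncomputable def gaussSum' (a b : ℤ) (c : ℕ) : ℂ :=
  ∑ n ∈ Finset.range c, Complex.exp (2 * Real.pi * Complex.I * ((a * n ^ 2 + b * n) / c))

/-! With `ψ` the standard additive character of `ZMod q`, `G(-p, m, q) = Σ_x ψ(-p x² + m x)`.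
Substituting `x = y + h` gives `|G|² = Σ_h ψ(-p h² + m h) Σ_y ψ(-2p h y)`; as `p` is a unit the
inner sum is `q` if `2h = 0` and `0` otherwise, so only `h = 0` and `h = q/2` contribute.
At `h = q/2` the phase `(q/2)(m - p q/2)` vanishes mod `q`, because `p` is odd and
`m ≡ q/2 mod 2`. Hence `|G|² = 2q`. -/

open ZMod ComplexConjugate

lemma ZMod.sum_eq_sum_range {M : Type*} [AddCommMonoid M] (q : ℕ) [NeZero q] (f : ZMod q → M) :
    ∑ x, f x = ∑ n ∈ range q, f n := by
  refine sum_nbij' val (↑) (by simp [val_lt]) (by simp) (by simp) (fun n hn => ?_) (by simp)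
  simp [val_natCast_of_lt (mem_range.mp hn)]

lemma gaussSum'_eq_sum_stdAddChar (a b : ℤ) (q : ℕ) [NeZero q] :
    gaussSum' a b q = ∑ x : ZMod q, stdAddChar ((a : ZMod q) * x ^ 2 + (b : ZMod q) * x) := by
  rw [ZMod.sum_eq_sum_range, gaussSum']
  refine sum_congr rfl fun n _ => ?_
  have h := stdAddChar_coe (N := q) (a * n ^ 2 + b * n)
  push_cast at h
  rw [h]
  congr 1
  ring

section QuadraticPhase

variable {R : Type*} [CommRing R] [Fintype R]

-- Weyl differencing: substitute `x = y + h` in the first factor.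
lemma AddChar.sum_quadratic_mul_conj (ψ : AddChar R ℂ) (a b : R) :
    (∑ x, ψ (a * x ^ 2 + b * x)) * conj (∑ x, ψ (a * x ^ 2 + b * x)) =
      ∑ h, ψ (a * h ^ 2 + b * h) * ∑ y, ψ (y * (2 * a * h)) := by
  simp_rw [map_sum, sum_mul_sum, mul_sum, ← ψ.map_neg_eq_conj, ← ψ.map_add_eq_mul]
  rw [sum_comm, eq_comm, sum_comm]
  refine sum_congr rfl fun y _ => Fintype.sum_equiv (Equiv.addRight y) _ _ fun h => ?_
  rw [Equiv.coe_addRight]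
  congr 1
  ring

lemma AddChar.sum_quadratic_mul_conj_of_isPrimitive [DecidableEq R] {ψ : AddChar R ℂ}
    (hψ : ψ.IsPrimitive) (a b : R) :
    (∑ x, ψ (a * x ^ 2 + b * x)) * conj (∑ x, ψ (a * x ^ 2 + b * x)) =
      Fintype.card R * ∑ h with 2 * a * h = 0, ψ (a * h ^ 2 + b * h) := by
  rw [ψ.sum_quadratic_mul_conj, sum_filter, mul_sum]
  refine sum_congr rfl fun h _ => ?_
  rw [sum_mulShift _ hψ]
  split_ifs <;> simp [mul_comm]

end QuadraticPhase

lemma ZMod.two_mul_eq_zero_iff {r : ℕ} [NeZero r] {x : ZMod (2 * r)} :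
    2 * x = 0 ↔ x = 0 ∨ x = r := by
  rw [two_mul x, ← neg_eq_iff_add_eq_zero, neg_eq_self_iff]
  refine or_congr_right ⟨fun h => ?_, fun h => ?_⟩
  · rw [← natCast_zmod_val x, show x.val = r by omega]
  · rw [h, val_natCast_of_lt (by have := NeZero.pos r; omega)]

lemma ZMod.sum_stdAddChar_quadratic_mul_conj {r : ℕ} [NeZero r] {a : ZMod (2 * r)} (ha : IsUnit a)
    (b : ZMod (2 * r)) :
    (∑ x, stdAddChar (a * x ^ 2 + b * x)) * conj (∑ x, stdAddChar (a * x ^ 2 + b * x)) =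
      (2 * r : ℕ) * (1 + stdAddChar (a * (r : ZMod (2 * r)) ^ 2 + b * (r : ZMod (2 * r)))) := by
  have hr : (r : ZMod (2 * r)) ≠ 0 := by
    rw [Ne, natCast_eq_zero_iff]
    exact Nat.not_dvd_of_pos_of_lt (NeZero.pos r) (by have := NeZero.pos r; omega)
  have hzero (h : ZMod (2 * r)) : 2 * a * h = 0 ↔ h = 0 ∨ h = r := by
    rw [mul_right_comm, ha.mul_left_eq_zero, two_mul_eq_zero_iff]
  rw [AddChar.sum_quadratic_mul_conj_of_isPrimitive (isPrimitive_stdAddChar _), ZMod.card,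
    filter_congr fun h _ => hzero h, filter_or, filter_eq', filter_eq',
    if_pos (mem_univ _), if_pos (mem_univ _), ← insert_eq, sum_pair hr.symm]
  simp

lemma ZMod.neg_mul_sq_add_mul_eq_zero_of_odd {p m : ℤ} (hp : Odd p) {r : ℕ} (hm : r ≡ m [ZMOD 2]) :
    -(p : ZMod (2 * r)) * (r : ZMod (2 * r)) ^ 2 + m * r = 0 := by
  obtain ⟨k, rfl⟩ := hp
  obtain ⟨t, ht⟩ := hm.dvd
  have hcast : -((2 * k + 1 : ℤ) : ZMod (2 * r)) * (r : ZMod (2 * r)) ^ 2 + m * r =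
      ((2 * r * (t - k * r) : ℤ) : ZMod (2 * r)) := by
    have ht' := congrArg (Int.cast : ℤ → ZMod (2 * r)) ht
    push_cast at ht' ⊢
    linear_combination (r : ZMod (2 * r)) * ht'
  rw [hcast, intCast_zmod_eq_zero_iff_dvd]
  exact ⟨t - k * r, by push_cast; ring⟩

theorem stmt2 (q : ℕ) (hq : 0 < q) (heven : Even q) (p : ℤ) (hp : IsCoprime p (q : ℤ))
    (m : ℤ) (hm : (q / 2 : ℤ) ≡ m [ZMOD 2]) :
    ‖gaussSum' (-p) m q‖ = Real.sqrt (2 * q) := by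
  obtain ⟨r, rfl⟩ := heven.two_dvd
  have : NeZero r := ⟨by rintro rfl; simp at hq⟩
  have hp_odd : Odd p := Int.isCoprime_two_right.mp (hp.of_isCoprime_of_dvd_right (by simp))
  have hunit : IsUnit ((-p : ℤ) : ZMod (2 * r)) :=
    (coe_int_isUnit_iff_isCoprime _ _).mpr hp.neg_left.symm
  have hrm : (r : ℤ) ≡ m [ZMOD 2] := by simpa using hm
  have hS := sum_stdAddChar_quadratic_mul_conj hunit m
  rw [← gaussSum'_eq_sum_stdAddChar, mul_conj', Int.cast_neg,
    neg_mul_sq_add_mul_eq_zero_of_odd hp_odd hrm, AddChar.map_zero_eq_one] at hS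
  rw [← Real.sqrt_sq (norm_nonneg _)]
  congr 1
  apply Complex.ofReal_injective
  push_cast at hS ⊢
  rw [hS]
  ring
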